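/- Suppose the scattering matrix S is purely imaginary, the Hamiltonian matrices Ω_- and Ω_+ are purely imaginary, and the coupling matrices C_- and C_+ are either both real or both purely imaginary. Then for every s ∈ ℂ such that s·I_{2n} - A is invertible, the diagonal blocks of the quadrature transfer function vanish: G_qq[s] = 0 and G_pp[s] = 0; i.e., BAE measurements of q_out with respect to q_in and of p_out with respect to p_in are realized. -/
import Mathlib


open Matrix Complex

noncomputable section

/-- Entrywise real part of a complex matrix, viewed as a complex matrix. -/
def reM {α β : Type*} (M : Matrix α β ℂ) : Matrix α β ℂ :=
  M.map fun z => (z.re : ℂ)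

/-- Entrywise imaginary part of a complex matrix, viewed as a complex matrix. -/
def imM {α β : Type*} (M : Matrix α β ℂ) : Matrix α β ℂ :=
  M.map fun z => (z.im : ℂ)

/-- The quadrature scattering matrix `D = [[Re S, -Im S],[Im S, Re S]]`. -/
def QD {m : ℕ} (S : Matrix (Fin m) (Fin m) ℂ) :
    Matrix (Fin m ⊕ Fin m) (Fin m ⊕ Fin m) ℂ :=
  fromBlocks (reM S) (-(imM S)) (imM S) (reM S)

/-- The quadrature coupling matrix
`C = [[Re(C₋+C₊), -Im(C₋-C₊)],[Im(C₋+C₊), Re(C₋-C₊)]]`. -/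
def QC {m n : ℕ} (Cm Cp : Matrix (Fin m) (Fin n) ℂ) :
    Matrix (Fin m ⊕ Fin m) (Fin n ⊕ Fin n) ℂ :=
  fromBlocks (reM (Cm + Cp)) (-(imM (Cm - Cp))) (imM (Cm + Cp)) (reM (Cm - Cp))

/-- The quadrature input matrix
`B = -[[Re(C₋†-C₊†), -Im(C₋†-C₊†)],[Im(C₋†+C₊†), Re(C₋†+C₊†)]] · D`. -/
def QB {m n : ℕ} (Cm Cp : Matrix (Fin m) (Fin n) ℂ) (S : Matrix (Fin m) (Fin m) ℂ) :
    Matrix (Fin n ⊕ Fin n) (Fin m ⊕ Fin m) ℂ :=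
  -(fromBlocks (reM (Cmᴴ - Cpᴴ)) (-(imM (Cmᴴ - Cpᴴ)))
      (imM (Cmᴴ + Cpᴴ)) (reM (Cmᴴ + Cpᴴ)) * QD S)

/-- `JH = [[Im(Ω₋+Ω₊), Re(Ω₋-Ω₊)],[-Re(Ω₋+Ω₊), Im(Ω₋-Ω₊)]]`. -/
def QJH {n : ℕ} (Om Op : Matrix (Fin n) (Fin n) ℂ) :
    Matrix (Fin n ⊕ Fin n) (Fin n ⊕ Fin n) ℂ :=
  fromBlocks (imM (Om + Op)) (reM (Om - Op)) (-(reM (Om + Op))) (imM (Om - Op))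

/-- `𝕁ₖ = [[0, Iₖ],[-Iₖ, 0]]`. -/
def QJ (k : ℕ) : Matrix (Fin k ⊕ Fin k) (Fin k ⊕ Fin k) ℂ :=
  fromBlocks 0 1 (-1) 0

/-- `C♯ = -𝕁ₙ · C† · 𝕁ₘ`. -/
def QCsharp {m n : ℕ} (Cm Cp : Matrix (Fin m) (Fin n) ℂ) :
    Matrix (Fin n ⊕ Fin n) (Fin m ⊕ Fin m) ℂ :=
  -(QJ n * (QC Cm Cp)ᴴ * QJ m)

/-- `A = JH - (1/2) · C♯ · C`. -/
def QA {m n : ℕ} (Cm Cp : Matrix (Fin m) (Fin n) ℂ) (Om Op : Matrix (Fin n) (Fin n) ℂ) :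
    Matrix (Fin n ⊕ Fin n) (Fin n ⊕ Fin n) ℂ :=
  QJH Om Op - (1/2 : ℂ) • (QCsharp Cm Cp * QC Cm Cp)

/-- The quadrature transfer function `G[s] = D + C (sI - A)⁻¹ B`. -/
def QG {m n : ℕ} (Cm Cp : Matrix (Fin m) (Fin n) ℂ) (Om Op : Matrix (Fin n) (Fin n) ℂ)
    (S : Matrix (Fin m) (Fin m) ℂ) (s : ℂ) :
    Matrix (Fin m ⊕ Fin m) (Fin m ⊕ Fin m) ℂ :=
  QD S + QC Cm Cp *
    (s • (1 : Matrix (Fin n ⊕ Fin n) (Fin n ⊕ Fin n) ℂ) - QA Cm Cp Om Op)⁻¹ * QB Cm Cp S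


/-! ### Auxiliary lemmas -/

section Aux

lemma reM_add {α β : Type*} (M N : Matrix α β ℂ) : reM (M + N) = reM M + reM N := by
  ext i j; simp [reM]

lemma reM_sub {α β : Type*} (M N : Matrix α β ℂ) : reM (M - N) = reM M - reM N := by
  ext i j; simp [reM]

lemma imM_add {α β : Type*} (M N : Matrix α β ℂ) : imM (M + N) = imM M + imM N := by
  ext i j; simp [imM]

lemma imM_sub {α β : Type*} (M N : Matrix α β ℂ) : imM (M - N) = imM M - imM N := by
  ext i j; simp [imM]

lemma reM_conjT {α β : Type*} (M : Matrix α β ℂ) : reM (Mᴴ) = (reM M)ᵀ := by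
  ext i j; simp [reM, conjTranspose_apply]

lemma imM_conjT {α β : Type*} (M : Matrix α β ℂ) : imM (Mᴴ) = -((imM M)ᵀ) := by
  ext i j; simp [imM, conjTranspose_apply]

/-- The signature matrix `K = [[1,0],[0,-1]]`. -/
def Kb (k : ℕ) : Matrix (Fin k ⊕ Fin k) (Fin k ⊕ Fin k) ℂ :=
  fromBlocks 1 0 0 (-1)

lemma Kb_mul_Kb (k : ℕ) : Kb k * Kb k = 1 := by
  simp [Kb, fromBlocks_multiply, ← fromBlocks_one]

lemma Kb_conjT (k : ℕ) : (Kb k)ᴴ = Kb k := by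
  simp [Kb, fromBlocks_conjTranspose]

lemma Kb_inv (k : ℕ) : (Kb k)⁻¹ = Kb k :=
  Matrix.inv_eq_right_inv (Kb_mul_Kb k)

lemma Kb_sandwich {k l : ℕ} (M : Matrix (Fin k ⊕ Fin k) (Fin l ⊕ Fin l) ℂ) :
    Kb k * M * Kb l =
      fromBlocks M.toBlocks₁₁ (-M.toBlocks₁₂) (-M.toBlocks₂₁) M.toBlocks₂₂ := by
  conv_lhs => rw [← fromBlocks_toBlocks M]
  simp [Kb, fromBlocks_multiply]

lemma sandwich_eq_self {k l : ℕ} (M : Matrix (Fin k ⊕ Fin k) (Fin l ⊕ Fin l) ℂ)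
    (h12 : M.toBlocks₁₂ = 0) (h21 : M.toBlocks₂₁ = 0) :
    Kb k * M * Kb l = M := by
  rw [Kb_sandwich, h12, h21, neg_zero]
  conv_rhs => rw [← fromBlocks_toBlocks M, h12, h21]

lemma sandwich_eq_neg {k l : ℕ} (M : Matrix (Fin k ⊕ Fin k) (Fin l ⊕ Fin l) ℂ)
    (h11 : M.toBlocks₁₁ = 0) (h22 : M.toBlocks₂₂ = 0) :
    Kb k * M * Kb l = -M := by
  rw [Kb_sandwich, h11, h22]
  conv_rhs => rw [← fromBlocks_toBlocks M, h11, h22]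
  simp [fromBlocks_neg]

lemma blocks_of_sandwich_neg {k l : ℕ} (M : Matrix (Fin k ⊕ Fin k) (Fin l ⊕ Fin l) ℂ)
    (h : Kb k * M * Kb l = -M) :
    M.toBlocks₁₁ = 0 ∧ M.toBlocks₂₂ = 0 := by
  rw [Kb_sandwich] at h
  constructor
  · ext i j
    have := congrFun (congrFun h (Sum.inl i)) (Sum.inl j)
    simp [fromBlocks, toBlocks₁₁] at this
    simp only [toBlocks₁₁, submatrix_apply, Matrix.zero_apply, Matrix.of_apply]
    linear_combination this / 2
  · ext i j
    have := congrFun (congrFun h (Sum.inr i)) (Sum.inr j)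
    simp [fromBlocks, toBlocks₂₂] at this
    simp only [toBlocks₂₂, submatrix_apply, Matrix.zero_apply, Matrix.of_apply]
    linear_combination this / 2

lemma sandwich_mul {k l p : ℕ} (X : Matrix (Fin k ⊕ Fin k) (Fin l ⊕ Fin l) ℂ)
    (Y : Matrix (Fin l ⊕ Fin l) (Fin p ⊕ Fin p) ℂ) :
    Kb k * (X * Y) * Kb p = (Kb k * X * Kb l) * (Kb l * Y * Kb p) := by
  have h : (Kb k * X * Kb l) * (Kb l * Y * Kb p)
      = Kb k * (X * ((Kb l * Kb l) * (Y * Kb p))) := by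
    simp only [Matrix.mul_assoc]
  rw [h, Kb_mul_Kb, Matrix.one_mul]
  simp only [Matrix.mul_assoc]

/-- The left factor of `QB`. -/
def QF {m n : ℕ} (Cm Cp : Matrix (Fin m) (Fin n) ℂ) :
    Matrix (Fin n ⊕ Fin n) (Fin m ⊕ Fin m) ℂ :=
  fromBlocks (reM (Cmᴴ - Cpᴴ)) (-(imM (Cmᴴ - Cpᴴ)))
      (imM (Cmᴴ + Cpᴴ)) (reM (Cmᴴ + Cpᴴ))

lemma QB_eq {m n : ℕ} (Cm Cp : Matrix (Fin m) (Fin n) ℂ) (S : Matrix (Fin m) (Fin m) ℂ) :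
    QB Cm Cp S = -(QF Cm Cp * QD S) := rfl

lemma main_aux {m n : ℕ} (Cm Cp : Matrix (Fin m) (Fin n) ℂ)
    (Om Op : Matrix (Fin n) (Fin n) ℂ) (S : Matrix (Fin m) (Fin m) ℂ)
    (hS : reM S = 0) (hOm : reM Om = 0) (hOp : reM Op = 0)
    (ε : ℂ) (hε2 : ε * ε = 1) (hεs : star ε = ε)
    (hKC : Kb m * QC Cm Cp * Kb n = ε • QC Cm Cp)
    (hKF : Kb n * QF Cm Cp * Kb m = ε • QF Cm Cp)
    (s : ℂ) :
    Kb m * QG Cm Cp Om Op S s * Kb m = -(QG Cm Cp Om Op S s) := by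
  have hKD : Kb m * QD S * Kb m = -(QD S) := by
    apply sandwich_eq_neg
    · rw [QD, toBlocks_fromBlocks₁₁, hS]
    · rw [QD, toBlocks_fromBlocks₂₂, hS]
  have hKJH : Kb n * QJH Om Op * Kb n = QJH Om Op := by
    apply sandwich_eq_self
    · rw [QJH, toBlocks_fromBlocks₁₂, reM_sub, hOm, hOp, sub_zero]
    · rw [QJH, toBlocks_fromBlocks₂₁, reM_add, hOm, hOp, add_zero, neg_zero]
  have hKJ : ∀ k, Kb k * QJ k * Kb k = -(QJ k) := by
    intro k
    apply sandwich_eq_neg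
    · rw [QJ, toBlocks_fromBlocks₁₁]
    · rw [QJ, toBlocks_fromBlocks₂₂]
  have hKCH : Kb n * (QC Cm Cp)ᴴ * Kb m = ε • (QC Cm Cp)ᴴ := by
    have := congrArg conjTranspose hKC
    rw [conjTranspose_mul, conjTranspose_mul, Kb_conjT, Kb_conjT,
      conjTranspose_smul, hεs] at this
    rw [← Matrix.mul_assoc] at this
    exact this
  have hKCs : Kb n * QCsharp Cm Cp * Kb m = ε • QCsharp Cm Cp := by
    simp only [QCsharp]
    rw [Matrix.mul_neg, Matrix.neg_mul, sandwich_mul, sandwich_mul,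
      hKJ n, hKJ m, hKCH]
    simp [Matrix.mul_smul, Matrix.smul_mul, Matrix.neg_mul, Matrix.mul_neg, smul_neg]
  have hKCsC : Kb n * (QCsharp Cm Cp * QC Cm Cp) * Kb n = QCsharp Cm Cp * QC Cm Cp := by
    rw [sandwich_mul, hKCs, hKC, Matrix.smul_mul, Matrix.mul_smul, smul_smul, hε2, one_smul]
  have hKA : Kb n * QA Cm Cp Om Op * Kb n = QA Cm Cp Om Op := by
    rw [QA, Matrix.mul_sub, Matrix.sub_mul, hKJH, Matrix.mul_smul, Matrix.smul_mul, hKCsC]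
  have hKM : Kb n * (s • (1 : Matrix (Fin n ⊕ Fin n) (Fin n ⊕ Fin n) ℂ) - QA Cm Cp Om Op) * Kb n
      = s • (1 : Matrix (Fin n ⊕ Fin n) (Fin n ⊕ Fin n) ℂ) - QA Cm Cp Om Op := by
    rw [Matrix.mul_sub, Matrix.sub_mul, hKA, Matrix.mul_smul, Matrix.smul_mul,
      Matrix.mul_one, Kb_mul_Kb]
  have hKinv : Kb n * (s • (1 : Matrix (Fin n ⊕ Fin n) (Fin n ⊕ Fin n) ℂ) - QA Cm Cp Om Op)⁻¹ * Kb n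
      = (s • (1 : Matrix (Fin n ⊕ Fin n) (Fin n ⊕ Fin n) ℂ) - QA Cm Cp Om Op)⁻¹ := by
    conv_rhs => rw [← hKM]
    rw [Matrix.mul_inv_rev, Matrix.mul_inv_rev, Kb_inv, Matrix.mul_assoc]
  have hKB : Kb n * QB Cm Cp S * Kb m = (-ε) • QB Cm Cp S := by
    rw [QB_eq, Matrix.mul_neg, Matrix.neg_mul, sandwich_mul, hKF, hKD]
    simp [Matrix.smul_mul, Matrix.mul_neg, smul_neg, neg_smul]
  rw [QG, Matrix.mul_add, Matrix.add_mul, hKD, sandwich_mul, sandwich_mul,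
    hKC, hKinv, hKB]
  simp only [Matrix.smul_mul, Matrix.mul_smul, Matrix.mul_neg, smul_neg, smul_smul,
    mul_neg, neg_mul, hε2, neg_smul, one_smul, neg_add]

end Aux

/-- S purely imaginary, Ω₋, Ω₊ purely imaginary, C₋, C₊ both real or both purely imaginary ⟹ G_qq[s] = 0 and G_pp[s] = 0. -/
theorem stmt2 {m n : ℕ} (Cm Cp : Matrix (Fin m) (Fin n) ℂ)
    (Om Op : Matrix (Fin n) (Fin n) ℂ)
    (S : Matrix (Fin m) (Fin m) ℂ)
    (hOmHerm : Omᴴ = Om) (hOpSymm : Opᵀ = Op)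
    (hS : reM S = 0) (hOm : reM Om = 0) (hOp : reM Op = 0)
    (hC : (imM Cm = 0 ∧ imM Cp = 0) ∨ (reM Cm = 0 ∧ reM Cp = 0))
    (s : ℂ)
    (hs : IsUnit (s • (1 : Matrix (Fin n ⊕ Fin n) (Fin n ⊕ Fin n) ℂ) - QA Cm Cp Om Op)) :
    (QG Cm Cp Om Op S s).toBlocks₁₁ = 0 ∧ (QG Cm Cp Om Op S s).toBlocks₂₂ = 0 := by
  have key : Kb m * QG Cm Cp Om Op S s * Kb m = -(QG Cm Cp Om Op S s) := by
    rcases hC with ⟨h1, h2⟩ | ⟨h1, h2⟩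
    · apply main_aux Cm Cp Om Op S hS hOm hOp 1 (by norm_num) (by norm_num)
      · rw [one_smul]
        apply sandwich_eq_self
        · rw [QC, toBlocks_fromBlocks₁₂, imM_sub, h1, h2, sub_zero, neg_zero]
        · rw [QC, toBlocks_fromBlocks₂₁, imM_add, h1, h2, add_zero]
      · rw [one_smul]
        apply sandwich_eq_self
        · rw [QF, toBlocks_fromBlocks₁₂, imM_sub, imM_conjT, imM_conjT, h1, h2]
          simp
        · rw [QF, toBlocks_fromBlocks₂₁, imM_add, imM_conjT, imM_conjT, h1, h2]
          simp
    · apply main_aux Cm Cp Om Op S hS hOm hOp (-1) (by norm_num) (by norm_num)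
      · rw [neg_one_smul]
        apply sandwich_eq_neg
        · rw [QC, toBlocks_fromBlocks₁₁, reM_add, h1, h2, add_zero]
        · rw [QC, toBlocks_fromBlocks₂₂, reM_sub, h1, h2, sub_zero]
      · rw [neg_one_smul]
        apply sandwich_eq_neg
        · rw [QF, toBlocks_fromBlocks₁₁, reM_sub, reM_conjT, reM_conjT, h1, h2]
          simp
        · rw [QF, toBlocks_fromBlocks₂₂, reM_add, reM_conjT, reM_conjT, h1, h2]
          simp
  exact blocks_of_sandwich_neg _ key
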